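/- arXiv:1307.7657 — 3 statements merged into one kernel-verified Lean document; each statement's English description precedes it below -/
import Mathlib

section
/- Let J be a strongly stable monomial ideal in A[x₀,…,xₙ] over a commutative noetherian ring A, let m be the maximum degree of monomials in the minimal generating set B_J, let F_J be a J-marked set and I = (F_J). The following are equivalent: (a) F_J is a J-marked basis; (b) I_s = ⟨F_J^{(s)}⟩ as A-modules for every s ≤ m+1; (c) (I ∩ ⟨N(J)⟩)_s = 0 for every s ≤ m+1. -/
open MvPolynomial

noncomputable section

/-- Exponent vectors of monomials in the variables `x₀, …, xₙ`. -/
abbrev Mon (n : ℕ) : Type := Fin (n + 1) →₀ ℕ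

namespace MarkedFamilies

variable {n : ℕ}

/-- The total degree of a monomial given by its exponent vector. -/
def mdeg (α : Mon n) : ℕ := α.sum fun _ e => e

/-- A monomial ideal, identified with its (upward closed) set of monomials. -/
def IsMonomialIdeal (J : Set (Mon n)) : Prop := ∀ α ∈ J, ∀ δ : Mon n, α + δ ∈ J

/-- A strongly stable monomial ideal: a monomial ideal such that for every monomial
`x^α ∈ J`, every variable `x_j` dividing `x^α` and every `i > j`, `(x_i/x_j)·x^α ∈ J`. -/
def IsStronglyStable (J : Set (Mon n)) : Prop :=
  IsMonomialIdeal J ∧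
    ∀ α ∈ J, ∀ j : Fin (n + 1), α j ≠ 0 → ∀ i : Fin (n + 1), j < i →
      α - Finsupp.single j 1 + Finsupp.single i 1 ∈ J

/-- The minimal monomial generators `B_J` of a monomial ideal `J`. -/
def minGens (J : Set (Mon n)) : Set (Mon n) :=
  {α | α ∈ J ∧ ∀ j : Fin (n + 1), α j ≠ 0 → α - Finsupp.single j 1 ∉ J}

/-- `min x^γ ≥ max x^δ`: every variable dividing `x^γ` is at least every variable
dividing `x^δ` (vacuously true when either monomial is `1`). -/
def minGeMax (γ δ : Mon n) : Prop := ∀ i ∈ γ.support, ∀ j ∈ δ.support, j ≤ i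

/-- Lexicographic order induced by `x₀ < ⋯ < xₙ`: `a <ₗₑₓ b` iff at the largest
index where they differ, `a` has the smaller exponent. -/
def lexLt (a b : Mon n) : Prop :=
  ∃ i : Fin (n + 1), a i < b i ∧ ∀ j : Fin (n + 1), i < j → a j = b j

/-- A saturated strongly stable ideal: strongly stable and no minimal generator is
divisible by `x₀`. -/
def IsSaturatedSS (J : Set (Mon n)) : Prop :=
  IsStronglyStable J ∧ ∀ α ∈ minGens J, α 0 = 0

/-- The truncation `J_{≥ t}`: the (monomial) ideal generated by the monomials of `J`
of degree at least `t`. -/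
def truncSet (J : Set (Mon n)) (t : ℕ) : Set (Mon n) := {α | α ∈ J ∧ t ≤ mdeg α}

section Ring

variable (A : Type*) [CommRing A]

/-- `⟨N(J)⟩`: the `A`-span of the monomials not in `J`. -/
def nSpan (J : Set (Mon n)) : Submodule A (MvPolynomial (Fin (n + 1)) A) :=
  Submodule.span A {p | ∃ β : Mon n, β ∉ J ∧ p = monomial β (1 : A)}

/-- `⟨N(J)_s⟩`: the `A`-span of the monomials of degree `s` not in `J`. -/
def nSpanDeg (J : Set (Mon n)) (s : ℕ) : Submodule A (MvPolynomial (Fin (n + 1)) A) :=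
  Submodule.span A {p | ∃ β : Mon n, β ∉ J ∧ mdeg β = s ∧ p = monomial β (1 : A)}

/-- `I_s`: the degree-`s` homogeneous component of an ideal, as an `A`-submodule. -/
def idealDeg (I : Ideal (MvPolynomial (Fin (n + 1)) A)) (s : ℕ) :
    Submodule A (MvPolynomial (Fin (n + 1)) A) :=
  Submodule.restrictScalars A I ⊓ homogeneousSubmodule (Fin (n + 1)) A s

/-- `I_{≥ s}`: the ideal `⊕_{t ≥ s} I_t`, i.e. the ideal generated by the homogeneous
elements of `I` of degree at least `s`. -/
def idealGeq (I : Ideal (MvPolynomial (Fin (n + 1)) A)) (s : ℕ) :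
    Ideal (MvPolynomial (Fin (n + 1)) A) :=
  Ideal.span {f | f ∈ I ∧ ∃ t : ℕ, s ≤ t ∧ f.IsHomogeneous t}

/-- A homogeneous ideal of the polynomial ring. -/
def IsHomogIdeal (I : Ideal (MvPolynomial (Fin (n + 1)) A)) : Prop :=
  ∀ f ∈ I, ∀ s : ℕ, homogeneousComponent s f ∈ I

variable {A}

/-- A `J`-marked set: a family assigning to each minimal generator `x^α ∈ B_J` a
polynomial `f_α = x^α − Σ_{x^β ∈ N(J)_{|α|}} c_{αβ} x^β`. -/
def IsMarkedSet (J : Set (Mon n)) (F : Mon n → MvPolynomial (Fin (n + 1)) A) : Prop :=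
  ∀ α ∈ minGens J, (F α).coeff α = 1 ∧
    ∀ β ∈ (F α).support, β ≠ α → β ∉ J ∧ mdeg β = mdeg α

/-- The ideal generated by a marked set. -/
def markedIdeal (J : Set (Mon n)) (F : Mon n → MvPolynomial (Fin (n + 1)) A) :
    Ideal (MvPolynomial (Fin (n + 1)) A) :=
  Ideal.span (F '' minGens J)

/-- A `J`-marked basis: a `J`-marked set `F` with `A[x] = (F) ⊕ ⟨N(J)⟩` as `A`-modules. -/
def IsMarkedBasis (J : Set (Mon n)) (F : Mon n → MvPolynomial (Fin (n + 1)) A) : Prop :=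
  IsMarkedSet J F ∧
    IsCompl (Submodule.restrictScalars A (markedIdeal J F)) (nSpan A J)

/-- `F_J^{(s)} = { x^δ f_α : deg(x^δ f_α) = s, min x^α ≥ max x^δ }`. -/
def FSet (J : Set (Mon n)) (F : Mon n → MvPolynomial (Fin (n + 1)) A) (s : ℕ) :
    Set (MvPolynomial (Fin (n + 1)) A) :=
  {p | ∃ α δ : Mon n, α ∈ minGens J ∧ mdeg α + mdeg δ = s ∧ minGeMax α δ ∧
        p = monomial δ (1 : A) * F α}

/-- `F̂_J^{(s)} = { x^δ f_α : deg(x^δ f_α) = s, min x^α < max x^δ }`. -/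
def FHatSet (J : Set (Mon n)) (F : Mon n → MvPolynomial (Fin (n + 1)) A) (s : ℕ) :
    Set (MvPolynomial (Fin (n + 1)) A) :=
  {p | ∃ α δ : Mon n, α ∈ minGens J ∧ mdeg α + mdeg δ = s ∧ ¬ minGeMax α δ ∧
        p = monomial δ (1 : A) * F α}

/-- `SF_J^{(s)} = { x^δ f_β − x^γ f_α : x^δ f_β ∈ F̂_J^{(s)}, x^γ f_α ∈ F_J^{(s)},
x^δ x^β = x^γ x^α }`. -/
def SFSet (J : Set (Mon n)) (F : Mon n → MvPolynomial (Fin (n + 1)) A) (s : ℕ) :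
    Set (MvPolynomial (Fin (n + 1)) A) :=
  {p | ∃ α γ β δ : Mon n, α ∈ minGens J ∧ β ∈ minGens J ∧
      mdeg β + mdeg δ = s ∧ ¬ minGeMax β δ ∧
      mdeg α + mdeg γ = s ∧ minGeMax α γ ∧
      δ + β = γ + α ∧ p = monomial δ (1 : A) * F β - monomial γ (1 : A) * F α}

/-- A `(J_s)`-marked set: one marked polynomial `f̃_γ = x^γ − Σ_{x^δ ∈ N(J)_s} d_{γδ} x^δ`
for each monomial `x^γ` of degree `s` in `J`. -/
def IsTruncMarkedSet (J : Set (Mon n)) (s : ℕ)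
    (f : Mon n → MvPolynomial (Fin (n + 1)) A) : Prop :=
  ∀ γ : Mon n, γ ∈ J → mdeg γ = s →
    (f γ).coeff γ = 1 ∧ ∀ β ∈ (f γ).support, β ≠ γ → β ∉ J ∧ mdeg β = s

end Ring

/-- Index set for the generic coefficients `C_{αβ}` (`x^α ∈ B_J`, `x^β ∈ N(J)_{|α|}`). -/
abbrev CIdx (J : Set (Mon n)) : Type :=
  {p : Mon n × Mon n // p.1 ∈ minGens J ∧ p.2 ∉ J ∧ mdeg p.2 = mdeg p.1}

/-- The coefficient ring `ℤ[C]`. -/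
abbrev ZC (J : Set (Mon n)) : Type := MvPolynomial (CIdx J) ℤ

/-- The generic `J`-marked set `𝓕_J = { x^α − Σ_{x^β ∈ N(J)_{|α|}} C_{αβ} x^β }`
in `ℤ[C][x]`, characterized through its coefficients. -/
def IsGenericMarkedSet (J : Set (Mon n))
    (𝓕 : Mon n → MvPolynomial (Fin (n + 1)) (ZC J)) : Prop :=
  ∀ α : Mon n, ∀ hα : α ∈ minGens J,
    (𝓕 α).coeff α = 1 ∧
    (∀ γ : Mon n, ∀ hγ : γ ∉ J ∧ mdeg γ = mdeg α,
      (𝓕 α).coeff γ = - MvPolynomial.X ⟨(α, γ), hα, hγ.1, hγ.2⟩) ∧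
    (∀ γ : Mon n, γ ≠ α → ¬(γ ∉ J ∧ mdeg γ = mdeg α) → (𝓕 α).coeff γ = 0)

/-- The ideal `𝔦_J ⊆ ℤ[C]` generated by the `x`-coefficients of all polynomials
in `(𝓕_J) ∩ ⟨N(J)⟩`. -/
def markedCoeffIdeal (J : Set (Mon n))
    (𝓕 : Mon n → MvPolynomial (Fin (n + 1)) (ZC J)) : Ideal (ZC J) :=
  Ideal.span {c : ZC J | ∃ p : MvPolynomial (Fin (n + 1)) (ZC J),
    p ∈ markedIdeal J 𝓕 ∧ p ∈ nSpan (ZC J) J ∧ ∃ γ : Mon n, p.coeff γ = c}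

/-- The evaluation homomorphism `φ_{F_J} : ℤ[C] → A`, `C_{αβ} ↦ c_{αβ}`, associated to a
`J`-marked set `F` with `f_α = x^α − Σ c_{αβ} x^β` (so `c_{αβ} = −(F α).coeff β`). -/
noncomputable def evalHom (J : Set (Mon n)) {A : Type*} [CommRing A]
    (F : Mon n → MvPolynomial (Fin (n + 1)) A) : ZC J →+* A :=
  MvPolynomial.eval₂Hom (Int.castRingHom A) fun p => -((F p.val.1).coeff p.val.2)

/-- `x^γ` is the `σ`-leading monomial of `g` (with nonzero leading coefficient). -/
def IsLeadingMon {A : Type*} [CommRing A] (σlt : Mon n → Mon n → Prop)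
    (g : MvPolynomial (Fin (n + 1)) A) (γ : Mon n) : Prop :=
  g.coeff γ ≠ 0 ∧ ∀ δ ∈ g.support, δ ≠ γ → σlt δ γ

/-- `LC(I, x^γ)`: the set of leading coefficients at `x^γ` of elements of `I`,
together with `0`. -/
def LCset {A : Type*} [CommRing A] (σlt : Mon n → Mon n → Prop)
    (I : Ideal (MvPolynomial (Fin (n + 1)) A)) (γ : Mon n) : Set A :=
  {a | ∃ g ∈ I, IsLeadingMon σlt g γ ∧ g.coeff γ = a} ∪ {0}

/-- A monic ideal with respect to the term ordering `σ`. -/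
def IsMonicIdeal {A : Type*} [CommRing A] (σlt : Mon n → Mon n → Prop)
    (I : Ideal (MvPolynomial (Fin (n + 1)) A)) : Prop :=
  ∀ γ : Mon n, LCset σlt I γ = {0} ∨ LCset σlt I γ = Set.univ

/-- The set of `σ`-leading monomials of elements of `I` (i.e. `in_σ(I)`,
identified with its set of monomials). -/
def leadingMons {A : Type*} [CommRing A] (σlt : Mon n → Mon n → Prop)
    (I : Ideal (MvPolynomial (Fin (n + 1)) A)) : Set (Mon n) :=
  {γ | ∃ g ∈ I, IsLeadingMon σlt g γ}

end MarkedFamilies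
end

/-!
Every monomial `x^γ ∈ J` factors uniquely as `x^γ = x^a ·_J x^d` with `x^a ∈ B_J` and
`min x^a ≥ max x^d` (Eliahou–Kervaire), so `x^d f_a ∈ F_J^{(s)}` is the element with head `x^γ`.
Multipliers are compared in the lex order `x₀ < ⋯ < xₙ` of the paper, which is Mathlib's `Colex`
order on exponent vectors. Reducing along these elements writes every homogeneous polynomial in
`⟨F_J^{(s)}⟩ + ⟨N(J)_s⟩`, and looking at the lex-largest multiplier shows
`⟨F_J^{(s)}⟩ ∩ ⟨N(J)⟩ = 0`; this gives (a) ⇒ (b) ⇒ (c) and `(F_J) + ⟨N(J)⟩ = A[x]`.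

For (c) ⇒ (a) it suffices that every `x^η f_α` lies in `⟨F_J^{(s)}⟩`. If
`x_i = max x^η > x_j = min x^α`, write `x_i x^α / x_j = x^{a'} ·_J x^{d'}`: then `x_i f_α` and
`x_j x^{d'} f_{a'}` have the same head, and their difference has degree `|α| + 1 ≤ m + 1`, so by (c)
it is a combination of multiples whose multipliers are lex-smaller than `x_i`. Induction on the
multiplier `x^η` concludes.
-/

open Finsupp (single single_apply mem_support_iff le_def)
open scoped Pointwise

namespace MarkedFamilies

variable {n : ℕ} {J : Set (Mon n)}

section Monomials

lemma mdeg_eq_degree (a : Mon n) : mdeg a = a.degree := rfl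

@[simp]
lemma mdeg_add (a b : Mon n) : mdeg (a + b) = mdeg a + mdeg b :=
  map_add Finsupp.degree a b

@[simp]
lemma mdeg_single (i : Fin (n + 1)) (k : ℕ) : mdeg (single i k) = k :=
  Finsupp.degree_single i k

lemma IsMonomialIdeal.mem_of_le (hJ : IsMonomialIdeal J) {a b : Mon n} (ha : a ∈ J)
    (hab : a ≤ b) : b ∈ J := by
  simpa [add_tsub_cancel_of_le hab] using hJ a ha (b - a)

lemma IsMonomialIdeal.eq_of_le_of_mem_minGens (hJ : IsMonomialIdeal J) {a b : Mon n}
    (ha : a ∈ J) (hb : b ∈ minGens J) (hab : a ≤ b) : a = b := by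
  by_contra hne
  obtain ⟨j, hj⟩ : ∃ j, a j < b j := by
    by_contra! h
    exact hne (le_antisymm hab (le_def.2 h))
  refine hb.2 j (by omega) (hJ.mem_of_le ha (le_def.2 fun r => ?_))
  have := le_def.1 hab r
  simp only [Finsupp.tsub_apply, single_apply]
  split_ifs <;> subst_vars <;> omega

lemma IsStronglyStable.sub_single_mem (hJ : IsStronglyStable J) {γ : Mon n} {j k : Fin (n + 1)}
    (hk : γ - single k 1 ∈ J) (hγk : γ k ≠ 0) (hγj : γ j ≠ 0) (hjk : j ≤ k) :
    γ - single j 1 ∈ J := by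
  rcases hjk.eq_or_lt with rfl | hjk
  · exact hk
  have hmem := hJ.2 _ hk j (by simp [hjk.ne']; omega) k hjk
  convert hmem using 1
  ext r
  simp only [Finsupp.add_apply, Finsupp.tsub_apply, single_apply]
  split_ifs <;> subst_vars <;> omega

end Monomials

section Decomposition

/-- `x^γ = x^a ·_J x^d`: the Eliahou–Kervaire decomposition of a monomial of `J`. -/
def IsEKDecomp (J : Set (Mon n)) (a d γ : Mon n) : Prop :=
  a ∈ minGens J ∧ minGeMax a d ∧ γ = a + d

lemma exists_isEKDecomp (hJ : IsStronglyStable J) {γ : Mon n} (hγ : γ ∈ J) :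
    ∃ a d, IsEKDecomp J a d γ := by
  induction γ using WellFoundedLT.induction with
  | _ γ ih =>
  by_cases hB : γ ∈ minGens J
  · exact ⟨γ, 0, hB, by simp [minGeMax], (add_zero γ).symm⟩
  obtain ⟨k, hk, hkJ⟩ : ∃ k, γ k ≠ 0 ∧ γ - single k 1 ∈ J := by
    by_contra! h
    exact hB ⟨hγ, h⟩
  have hsupp : γ.support.Nonempty := ⟨k, mem_support_iff.2 hk⟩
  set j := γ.support.min' hsupp
  have hj : γ j ≠ 0 := mem_support_iff.1 (γ.support.min'_mem hsupp)
  have hjγ : ∀ r ∈ γ.support, j ≤ r := fun r hr => γ.support.min'_le r hr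
  have hlt : γ - single j 1 < γ := by
    refine lt_of_le_of_ne tsub_le_self fun h => ?_
    have := congrArg (· j) h
    simp only [Finsupp.tsub_apply, Finsupp.single_eq_same] at this
    omega
  obtain ⟨a, d, ha, had, hγ'⟩ :=
    ih _ hlt (hJ.sub_single_mem hkJ hk hj (hjγ k (mem_support_iff.2 hk)))
  refine ⟨a, d + single j 1, ha, fun i hi r hr => ?_, ?_⟩
  · rcases Finset.mem_union.1 (Finsupp.support_add hr) with hr | hr
    · exact had i hi r hr
    · rw [(Finsupp.mem_support_single _ _ _).1 hr |>.1]
      refine hjγ i (Finsupp.support_mono (tsub_le_self (b := single j 1)) ?_)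
      rw [hγ']
      exact Finsupp.support_mono le_self_add hi
  · rw [← add_assoc, ← hγ', tsub_add_cancel_of_le]
    exact Finsupp.single_le_iff.2 (Nat.one_le_iff_ne_zero.2 hj)

variable {a d a' d' γ : Mon n}

lemma IsEKDecomp.apply_eq_of_lt (h : IsEKDecomp J a d γ) {r s : Fin (n + 1)} (hr : a r ≠ 0)
    (hrs : r < s) : a s = γ s := by
  have hds : d s = 0 := by
    by_contra hds
    exact absurd (h.2.1 r (mem_support_iff.2 hr) s (mem_support_iff.2 hds)) (not_le.2 hrs)
  simp [h.2.2, hds]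

lemma IsEKDecomp.le_or_le (h : IsEKDecomp J a d γ) (h' : IsEKDecomp J a' d' γ) :
    a ≤ a' ∨ a' ≤ a := by
  by_contra! hne
  obtain ⟨r, hr⟩ : ∃ r, a' r < a r := by simpa [le_def] using hne.1
  obtain ⟨r', hr'⟩ : ∃ r, a r < a' r := by simpa [le_def] using hne.2
  have hγ : ∀ s, a s ≤ γ s ∧ a' s ≤ γ s := fun s =>
    ⟨by rw [h.2.2, Finsupp.add_apply]; omega, by rw [h'.2.2, Finsupp.add_apply]; omega⟩
  rcases lt_trichotomy r r' with hrr | rfl | hrr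
  · have := h.apply_eq_of_lt (by omega) hrr
    have := hγ r'
    omega
  · omega
  · have := h'.apply_eq_of_lt (by omega) hrr
    have := hγ r
    omega

lemma IsEKDecomp.unique (hJ : IsMonomialIdeal J) (h : IsEKDecomp J a d γ)
    (h' : IsEKDecomp J a' d' γ) : a = a' ∧ d = d' := by
  obtain rfl : a = a' := (h.le_or_le h').elim (hJ.eq_of_le_of_mem_minGens h.1.1 h'.1)
    fun hle => (hJ.eq_of_le_of_mem_minGens h'.1.1 h.1 hle).symm
  exact ⟨rfl, add_left_cancel (h.2.2.symm.trans h'.2.2)⟩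

lemma IsEKDecomp.toColex_lt (hJ : IsMonomialIdeal J) {β δ : Mon n} (hβ : β ∉ J)
    (h : IsEKDecomp J a d (δ + β)) : toColex d < toColex δ := by
  rcases lt_trichotomy (toColex d) (toColex δ) with hlt | heq | hgt
  · exact hlt
  · rw [toColex_inj] at heq
    subst heq
    exact absurd (add_left_cancel (h.2.2.trans (add_comm a d)) ▸ h.1.1) hβ
  · obtain ⟨t, htop, ht⟩ := Finsupp.Colex.lt_iff.1 hgt
    simp only [ofColex_toColex] at htop ht
    refine absurd (hJ.mem_of_le h.1.1 (le_def.2 fun r => ?_)) hβ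
    have hr := congrArg (· r) h.2.2
    simp only [Finsupp.add_apply] at hr
    rcases lt_trichotomy r t with hrt | rfl | hrt
    · have : a r = 0 := by
        by_contra har
        exact absurd (h.2.1 r (mem_support_iff.2 har) t (mem_support_iff.2 (by omega)))
          (not_le.2 hrt)
      omega
    · omega
    · have := htop r hrt
      omega

/-- Otherwise `x^a` involves only variables `≥ x_t ≥ x_i`, and `x^a` or `x_t x^a / x_i` would be a
monomial of `J` dividing `x^α / x_j`. -/
lemma IsEKDecomp.lt_of_apply_ne_zero (hJ : IsStronglyStable J) {α : Mon n}
    (hα : α ∈ minGens J) {i j : Fin (n + 1)} (hj : α j ≠ 0) (hjα : ∀ k, α k ≠ 0 → j ≤ k)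
    (hji : j < i) (h : IsEKDecomp J a d (α - single j 1 + single i 1)) {t : Fin (n + 1)}
    (ht : d t ≠ 0) : t < i := by
  by_contra! hit
  have hγ : ∀ r, a r + d r = α r - (if j = r then 1 else 0) + (if i = r then 1 else 0) := by
    intro r
    simpa [single_apply] using (congrArg (· r) h.2.2).symm
  have haj : ∀ r, a r ≠ 0 → t ≤ r :=
    fun r hr => h.2.1 r (mem_support_iff.2 hr) t (mem_support_iff.2 ht)
  suffices ∃ θ ∈ J, θ ≤ α - single j 1 from
    hα.2 j hj (this.elim fun θ hθ => hJ.1.mem_of_le hθ.1 hθ.2)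
  by_cases hai : a i ≤ α i
  · refine ⟨a, h.1.1, le_def.2 fun r => ?_⟩
    have := hγ r
    have := haj r
    simp only [Finsupp.tsub_apply, single_apply]
    split_ifs at * <;> subst_vars <;> omega
  · have hti : i < t := by
      refine lt_of_le_of_ne hit fun hti => ?_
      have := hγ i
      subst hti
      simp only [if_neg hji.ne, if_true] at this
      omega
    refine ⟨a - single i 1 + single t 1, hJ.2 a h.1.1 i (by omega) t hti, le_def.2 fun r => ?_⟩
    have := hγ r
    have := haj r
    simp only [Finsupp.add_apply, Finsupp.tsub_apply, single_apply]
    split_ifs at * <;> subst_vars <;> omega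

lemma exists_mem_minGens_add_eq_single_add (hJ : IsStronglyStable J) {α : Mon n}
    (hα : α ∈ minGens J) {i j : Fin (n + 1)} (hj : α j ≠ 0) (hjα : ∀ k, α k ≠ 0 → j ≤ k) (hji : j < i) :
    ∃ β ε, β ∈ minGens J ∧ ε + β = single i 1 + α ∧ toColex ε < toColex (single i 1) := by
  obtain ⟨β, d, h⟩ := exists_isEKDecomp hJ (hJ.2 α hα.1 j hj i hji)
  refine ⟨β, single j 1 + d, h.1, ?_, Finsupp.Colex.lt_iff.2 ⟨i, fun k hik => ?_, ?_⟩⟩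
  · rw [add_assoc, add_comm d, ← h.2.2]
    ext r
    simp only [Finsupp.add_apply, Finsupp.tsub_apply, single_apply]
    split_ifs <;> subst_vars <;> omega
  · have := h.lt_of_apply_ne_zero hJ hα hj hjα hji (t := k)
    simp only [ofColex_toColex, Finsupp.add_apply, single_apply]
    split_ifs <;> omega
  · have := h.lt_of_apply_ne_zero hJ hα hj hjα hji (t := i)
    simp only [ofColex_toColex, Finsupp.add_apply, single_apply, if_neg hji.ne, if_true]
    omega

end Decomposition

section Polynomials

lemma mem_of_forall_monomial_mem {σ R : Type*} [CommSemiring R]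
    {M : Submodule R (MvPolynomial σ R)} {p : MvPolynomial σ R}
    (h : ∀ μ ∈ p.support, monomial μ (1 : R) ∈ M) : p ∈ M := by
  rw [p.as_sum]
  refine Submodule.sum_mem _ fun μ hμ => ?_
  simpa [smul_monomial] using M.smul_mem (p.coeff μ) (h μ hμ)

lemma mul_mem_of_mem_span {R S : Type*} [CommSemiring R] [Semiring S] [Algebra R S]
    {M : Submodule R S} {T : Set S} {c p : S} (hp : p ∈ Submodule.span R T)
    (h : ∀ x ∈ T, c * x ∈ M) : c * p ∈ M :=
  (Submodule.span_le (p := M.comap (LinearMap.mulLeft R c))).2 h hp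

lemma mdeg_eq_of_mem_support {R : Type*} [CommSemiring R] {p : MvPolynomial (Fin (n + 1)) R}
    {s : ℕ} (hp : p.IsHomogeneous s) {μ : Mon n} (hμ : μ ∈ p.support) : mdeg μ = s := by
  rw [mdeg_eq_degree, Finsupp.degree_eq_weight_one]
  exact hp (MvPolynomial.mem_support_iff.1 hμ)

end Polynomials

variable {A : Type*} [CommRing A] {F : Mon n → MvPolynomial (Fin (n + 1)) A}

section MarkedSets

lemma nSpan_eq_restrictSupport (J : Set (Mon n)) : nSpan A J = restrictSupport A Jᶜ := by
  rw [restrictSupport, AddMonoidAlgebra.supported_eq_span_single, nSpan]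
  congr 1
  ext p
  simp [eq_comm, monomial]

lemma mem_nSpan_iff {p : MvPolynomial (Fin (n + 1)) A} :
    p ∈ nSpan A J ↔ ∀ γ ∈ J, p.coeff γ = 0 := by
  rw [nSpan_eq_restrictSupport, mem_restrictSupport_iff]
  exact ⟨fun h γ hγ => notMem_support_iff.1 fun h' => h h' hγ,
    fun h γ hγ hγJ => MvPolynomial.mem_support_iff.1 hγ (h γ hγJ)⟩


lemma homogeneousComponent_mem_nSpan {p : MvPolynomial (Fin (n + 1)) A} (hp : p ∈ nSpan A J)
    (t : ℕ) : homogeneousComponent t p ∈ nSpan A J := by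
  rw [mem_nSpan_iff] at hp ⊢
  intro γ hγ
  rw [coeff_homogeneousComponent, hp γ hγ, ite_self]

lemma nSpanDeg_le_nSpan (J : Set (Mon n)) (s : ℕ) : nSpanDeg A J s ≤ nSpan A J :=
  Submodule.span_mono fun _ ⟨β, hβ, _, hp⟩ => ⟨β, hβ, hp⟩

lemma nSpanDeg_le_homogeneousSubmodule (J : Set (Mon n)) (s : ℕ) :
    nSpanDeg A J s ≤ homogeneousSubmodule (Fin (n + 1)) A s := by
  rw [nSpanDeg, Submodule.span_le]
  rintro _ ⟨β, -, rfl, rfl⟩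
  exact isHomogeneous_monomial 1 rfl

lemma monomial_mem_nSpanDeg {μ : Mon n} (hμ : μ ∉ J) :
    monomial μ (1 : A) ∈ nSpanDeg A J (mdeg μ) :=
  Submodule.subset_span ⟨μ, hμ, rfl, rfl⟩

lemma IsMarkedSet.isHomogeneous (hF : IsMarkedSet J F) {α : Mon n} (hα : α ∈ minGens J) :
    (F α).IsHomogeneous (mdeg α) := by
  intro μ hμ
  have hdeg : mdeg μ = mdeg α := by
    rcases eq_or_ne μ α with rfl | hne
    · rfl
    · exact ((hF α hα).2 μ (MvPolynomial.mem_support_iff.2 hμ) hne).2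
  rw [mdeg_eq_degree, Finsupp.degree_eq_weight_one] at hdeg
  exact hdeg

lemma IsMarkedSet.coeff_monomial_mul_add (hF : IsMarkedSet J F) {α : Mon n}
    (hα : α ∈ minGens J) (ε : Mon n) : (monomial ε (1 : A) * F α).coeff (ε + α) = 1 := by
  rw [coeff_monomial_mul, (hF α hα).1, one_mul]

lemma IsMarkedSet.exists_of_mem_support (hF : IsMarkedSet J F) {α ε μ : Mon n}
    (hα : α ∈ minGens J) (hμ : μ ∈ (monomial ε (1 : A) * F α).support) (hne : μ ≠ ε + α) :
    ∃ ν ∉ J, mdeg ν = mdeg α ∧ μ = ε + ν := by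
  rw [MvPolynomial.mem_support_iff, coeff_monomial_mul'] at hμ
  split_ifs at hμ with hεμ
  · have hμε : μ = ε + (μ - ε) := (add_tsub_cancel_of_le hεμ).symm
    have hν : μ - ε ≠ α := fun h => hne (h ▸ hμε)
    obtain ⟨hνJ, hνdeg⟩ := (hF α hα).2 _ (MvPolynomial.mem_support_iff.2 (by simpa using hμ)) hν
    exact ⟨μ - ε, hνJ, hνdeg, hμε⟩
  · exact absurd rfl hμ

lemma IsMarkedSet.monomial_mul_sub_mem (hF : IsMarkedSet J F) {α : Mon n}
    (hα : α ∈ minGens J) (ε : Mon n) {M : Submodule A (MvPolynomial (Fin (n + 1)) A)}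
    (hM : ∀ ν ∉ J, mdeg ν = mdeg α → monomial (ε + ν) (1 : A) ∈ M) :
    monomial ε (1 : A) * F α - monomial (ε + α) 1 ∈ M := by
  classical
  refine mem_of_forall_monomial_mem fun μ hμ => ?_
  have hμ' := MvPolynomial.mem_support_iff.1 hμ
  rw [coeff_sub, coeff_monomial] at hμ'
  have hne : μ ≠ ε + α := by
    rintro rfl
    rw [hF.coeff_monomial_mul_add hα, if_pos rfl, sub_self] at hμ'
    exact hμ' rfl
  rw [if_neg hne.symm, sub_zero] at hμ'
  obtain ⟨ν, hν, hνdeg, rfl⟩ :=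
    hF.exists_of_mem_support hα (MvPolynomial.mem_support_iff.2 hμ') hne
  exact hM ν hν hνdeg

/-- `F_J^{(s)}` is, by definition, the case `P = minGeMax`. -/
def markedMultiples (J : Set (Mon n)) (F : Mon n → MvPolynomial (Fin (n + 1)) A) (s : ℕ)
    (P : Mon n → Mon n → Prop) : Set (MvPolynomial (Fin (n + 1)) A) :=
  {p | ∃ α δ : Mon n, α ∈ minGens J ∧ mdeg α + mdeg δ = s ∧ P α δ ∧
    p = monomial δ (1 : A) * F α}

lemma markedMultiples_mono {s : ℕ} {P Q : Mon n → Mon n → Prop} (h : ∀ α δ, P α δ → Q α δ) :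
    markedMultiples J F s P ⊆ markedMultiples J F s Q :=
  fun _ ⟨α, δ, hα, hs, hP, hp⟩ => ⟨α, δ, hα, hs, h α δ hP, hp⟩

lemma monomial_mul_mem_markedIdeal {α : Mon n} (hα : α ∈ minGens J) (δ : Mon n) :
    monomial δ (1 : A) * F α ∈ markedIdeal J F :=
  Ideal.mul_mem_left _ _ (Ideal.subset_span ⟨α, hα, rfl⟩)

lemma span_markedMultiples_le (J : Set (Mon n)) (F : Mon n → MvPolynomial (Fin (n + 1)) A)
    (s : ℕ) (P : Mon n → Mon n → Prop) :
    Submodule.span A (markedMultiples J F s P) ≤ (markedIdeal J F).restrictScalars A := by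
  rw [Submodule.span_le]
  rintro _ ⟨α, δ, hα, -, -, rfl⟩
  exact monomial_mul_mem_markedIdeal hα δ

lemma IsMarkedSet.span_markedMultiples_le_homogeneousSubmodule (hF : IsMarkedSet J F) (s : ℕ)
    (P : Mon n → Mon n → Prop) :
    Submodule.span A (markedMultiples J F s P) ≤ homogeneousSubmodule (Fin (n + 1)) A s := by
  rw [Submodule.span_le]
  rintro _ ⟨α, δ, hα, rfl, -, rfl⟩
  rw [add_comm (mdeg α)]
  exact (isHomogeneous_monomial 1 rfl).mul (hF.isHomogeneous hα)

end MarkedSets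

section Reduction

lemma wellFounded_toColex : WellFounded fun a b : Mon n => toColex a < toColex b :=
  InvImage.wf toColex wellFounded_lt

lemma mem_span_markedMultiples_sup_of_imp {s : ℕ} {P Q : Mon n → Mon n → Prop}
    (h : ∀ α δ, P α δ → Q α δ) {N : Submodule A (MvPolynomial (Fin (n + 1)) A)}
    {p : MvPolynomial (Fin (n + 1)) A}
    (hp : p ∈ Submodule.span A (markedMultiples J F s P) ⊔ N) :
    p ∈ Submodule.span A (markedMultiples J F s Q) ⊔ N :=
  sup_le_sup_right (Submodule.span_mono (markedMultiples_mono h)) N hp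

lemma IsEKDecomp.monomial_mem_span_sup (hF : IsMarkedSet J F) {a d γ : Mon n}
    (h : IsEKDecomp J a d γ) {P : Mon n → Mon n → Prop} (had : P a d)
    (htail : ∀ ν ∉ J, mdeg ν = mdeg a → monomial (d + ν) (1 : A) ∈
      Submodule.span A (markedMultiples J F (mdeg (d + ν)) P) ⊔ nSpanDeg A J (mdeg (d + ν))) :
    monomial γ (1 : A) ∈
      Submodule.span A (markedMultiples J F (mdeg γ) P) ⊔ nSpanDeg A J (mdeg γ) := by
  have hdeg : mdeg a + mdeg d = mdeg γ := by rw [h.2.2, mdeg_add]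
  have hγ : monomial γ (1 : A) =
      monomial d 1 * F a - (monomial d 1 * F a - monomial (d + a) 1) := by
    rw [h.2.2, add_comm a d]
    ring
  rw [hγ]
  refine Submodule.sub_mem _ (Submodule.mem_sup_left
    (Submodule.subset_span ⟨a, d, h.1, hdeg, had, rfl⟩)) ?_
  refine hF.monomial_mul_sub_mem h.1 d fun ν hν hνdeg => ?_
  have hμdeg : mdeg (d + ν) = mdeg γ := by rw [mdeg_add, hνdeg, ← hdeg, add_comm]
  exact hμdeg ▸ htail ν hν hνdeg

lemma monomial_add_mem_span_sup (hJ : IsStronglyStable J) (hF : IsMarkedSet J F) (ε : Mon n)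
    {ν : Mon n} (hν : ν ∉ J) :
    monomial (ε + ν) (1 : A) ∈ Submodule.span A (markedMultiples J F (mdeg (ε + ν))
      fun α δ => minGeMax α δ ∧ toColex δ < toColex ε) ⊔ nSpanDeg A J (mdeg (ε + ν)) := by
  induction ε using wellFounded_toColex.induction generalizing ν with
  | _ ε ih =>
  by_cases hμ : ε + ν ∈ J
  · obtain ⟨a, d, h⟩ := exists_isEKDecomp hJ hμ
    have hlt := h.toColex_lt hJ.1 hν
    exact h.monomial_mem_span_sup hF ⟨h.2.1, hlt⟩ fun ν' hν' _ =>
      mem_span_markedMultiples_sup_of_imp (fun _ _ hP => ⟨hP.1, hP.2.trans hlt⟩) (ih d hlt hν')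
  · exact Submodule.mem_sup_right (monomial_mem_nSpanDeg hμ)

lemma monomial_mem_span_FSet_sup (hJ : IsStronglyStable J) (hF : IsMarkedSet J F) (γ : Mon n) :
    monomial γ (1 : A) ∈ Submodule.span A (FSet J F (mdeg γ)) ⊔ nSpanDeg A J (mdeg γ) := by
  by_cases hγ : γ ∈ J
  · obtain ⟨a, d, h⟩ := exists_isEKDecomp hJ hγ
    exact h.monomial_mem_span_sup hF (P := minGeMax) h.2.1 fun ν hν _ =>
      mem_span_markedMultiples_sup_of_imp (fun _ _ hP => hP.1)
        (monomial_add_mem_span_sup hJ hF d hν)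
  · exact Submodule.mem_sup_right (monomial_mem_nSpanDeg hγ)

lemma monomial_mul_sub_monomial_mul_mem (hJ : IsStronglyStable J) (hF : IsMarkedSet J F)
    {α β ε₁ ε₂ ε : Mon n} (hα : α ∈ minGens J) (hβ : β ∈ minGens J)
    (hε₁ : toColex ε₁ ≤ toColex ε) (hε₂ : toColex ε₂ ≤ toColex ε) (hhead : ε₁ + α = ε₂ + β) :
    monomial ε₁ (1 : A) * F α - monomial ε₂ 1 * F β ∈ Submodule.span A
      (markedMultiples J F (mdeg (ε₁ + α)) fun α' δ => minGeMax α' δ ∧ toColex δ < toColex ε) ⊔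
      nSpanDeg A J (mdeg (ε₁ + α)) := by
  have htail : ∀ ε', toColex ε' ≤ toColex ε → ∀ ν ∉ J, mdeg (ε' + ν) = mdeg (ε₁ + α) →
      monomial (ε' + ν) (1 : A) ∈ Submodule.span A (markedMultiples J F (mdeg (ε₁ + α))
        fun α' δ => minGeMax α' δ ∧ toColex δ < toColex ε) ⊔ nSpanDeg A J (mdeg (ε₁ + α)) := by
    intro ε' hε' ν hν hdeg
    rw [← hdeg]
    exact mem_span_markedMultiples_sup_of_imp (fun _ _ hP => ⟨hP.1, hP.2.trans_le hε'⟩)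
      (monomial_add_mem_span_sup hJ hF ε' hν)
  have h₁ := hF.monomial_mul_sub_mem hα ε₁ fun ν hν hνdeg =>
    htail _ hε₁ ν hν (by simp [hνdeg])
  have h₂ := hF.monomial_mul_sub_mem hβ ε₂ fun ν hν hνdeg =>
    htail _ hε₂ ν hν (by simp [hhead, hνdeg])
  simpa only [← hhead, sub_sub_sub_cancel_right] using Submodule.sub_mem _ h₁ h₂

lemma mem_span_FSet_sup_of_isHomogeneous (hJ : IsStronglyStable J) (hF : IsMarkedSet J F)
    {p : MvPolynomial (Fin (n + 1)) A} {s : ℕ} (hp : p.IsHomogeneous s) :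
    p ∈ Submodule.span A (FSet J F s) ⊔ nSpanDeg A J s :=
  mem_of_forall_monomial_mem fun μ hμ =>
    mdeg_eq_of_mem_support hp hμ ▸ monomial_mem_span_FSet_sup hJ hF μ

lemma codisjoint_markedIdeal_nSpan (hJ : IsStronglyStable J) (hF : IsMarkedSet J F) :
    Codisjoint ((markedIdeal J F).restrictScalars A) (nSpan A J) :=
  codisjoint_iff.2 <| eq_top_iff.2 fun _ _ => mem_of_forall_monomial_mem fun μ _ =>
    sup_le_sup (span_markedMultiples_le J F _ _) (nSpanDeg_le_nSpan J _)
      (monomial_mem_span_FSet_sup hJ hF μ)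

end Reduction

section Independence

lemma IsMarkedSet.coeff_monomial_mul_eq_zero (hJ : IsMonomialIdeal J) (hF : IsMarkedSet J F)
    {α δ α₀ δ₀ : Mon n} (hα : α ∈ minGens J) (hαδ : minGeMax α δ) (hα₀ : α₀ ∈ minGens J)
    (hαδ₀ : minGeMax α₀ δ₀) (hne : (α, δ) ≠ (α₀, δ₀)) (hδ : ¬ toColex δ₀ < toColex δ) :
    (monomial δ (1 : A) * F α).coeff (α₀ + δ₀) = 0 := by
  have h₀ : IsEKDecomp J α₀ δ₀ (α₀ + δ₀) := ⟨hα₀, hαδ₀, rfl⟩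
  by_contra hcoeff
  by_cases hhead : α₀ + δ₀ = δ + α
  · obtain ⟨rfl, rfl⟩ := h₀.unique hJ ⟨hα, hαδ, hhead.trans (add_comm δ α)⟩
    exact hne rfl
  · obtain ⟨ν, hν, -, hν₀⟩ :=
      hF.exists_of_mem_support hα (MvPolynomial.mem_support_iff.2 hcoeff) hhead
    exact hδ ((hν₀ ▸ h₀).toColex_lt hJ hν)

lemma eq_zero_of_mem_span_FSet_of_mem_nSpan (hJ : IsMonomialIdeal J) (hF : IsMarkedSet J F)
    {s : ℕ} {p : MvPolynomial (Fin (n + 1)) A} (hp : p ∈ Submodule.span A (FSet J F s))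
    (hpN : p ∈ nSpan A J) : p = 0 := by
  classical
  obtain ⟨c, hc, rfl⟩ := Submodule.mem_span_set.1 hp
  choose! α δ hα _ hαδ hgeq using fun g (hg : g ∈ c.support) => hc hg
  by_contra hne
  obtain ⟨g₀, hg₀, hmax⟩ := c.support.exists_max_image (fun g => toColex (δ g))
    (Finsupp.support_nonempty_iff.2 fun h => hne (by simp [h]))
  -- at the head of the term with lex-largest multiplier, no other term contributes
  have hcoeff : (c.sum fun g r => r • g).coeff (α g₀ + δ g₀) = c g₀ := by
    rw [Finsupp.sum, coeff_sum, Finset.sum_eq_single g₀]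
    · have hhead : g₀.coeff (α g₀ + δ g₀) = 1 := by
        rw [congrArg (coeff _) (hgeq g₀ hg₀), add_comm (α g₀)]
        exact hF.coeff_monomial_mul_add (hα g₀ hg₀) _
      rw [coeff_smul, hhead, smul_eq_mul, mul_one]
    · intro g hg hgne
      rw [coeff_smul, hgeq g hg, hF.coeff_monomial_mul_eq_zero hJ (hα g hg) (hαδ g hg)
        (hα g₀ hg₀) (hαδ g₀ hg₀) ?_ (not_lt.2 (hmax g hg)), smul_zero]
      intro hpair
      simp only [Prod.mk.injEq] at hpair
      exact hgne (by rw [hgeq g hg, hgeq g₀ hg₀, hpair.1, hpair.2])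
    · exact fun h => absurd hg₀ h
  have hJ₀ : α g₀ + δ g₀ ∈ J := hJ _ (hα g₀ hg₀).1 _
  exact Finsupp.mem_support_iff.1 hg₀ (hcoeff ▸ mem_nSpan_iff.1 hpN _ hJ₀)

end Independence

section LowDegrees

lemma mem_span_of_mem_sup_nSpanDeg {I : Ideal (MvPolynomial (Fin (n + 1)) A)}
    {S : Set (MvPolynomial (Fin (n + 1)) A)} {s : ℕ}
    (hS : Submodule.span A S ≤ I.restrictScalars A)
    (hI : (I.restrictScalars A ⊓ nSpan A J) ⊓ homogeneousSubmodule (Fin (n + 1)) A s = ⊥)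
    {g : MvPolynomial (Fin (n + 1)) A} (hg : g ∈ I)
    (hgS : g ∈ Submodule.span A S ⊔ nSpanDeg A J s) : g ∈ Submodule.span A S := by
  obtain ⟨p, hp, q, hq, rfl⟩ := Submodule.mem_sup.1 hgS
  have hqI : q ∈ I.restrictScalars A := by
    simpa using Submodule.sub_mem _ (show p + q ∈ I.restrictScalars A from hg) (hS hp)
  have hq0 : q ∈ (I.restrictScalars A ⊓ nSpan A J) ⊓ homogeneousSubmodule (Fin (n + 1)) A s :=
    ⟨⟨hqI, nSpanDeg_le_nSpan J s hq⟩, nSpanDeg_le_homogeneousSubmodule J s hq⟩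
  rw [hI, Submodule.mem_bot] at hq0
  simpa [hq0] using hp

lemma single_mul_mem_span_markedMultiples (hJ : IsStronglyStable J) (hF : IsMarkedSet J F)
    {α : Mon n} (hα : α ∈ minGens J)
    (hI : ((markedIdeal J F).restrictScalars A ⊓ nSpan A J) ⊓
      homogeneousSubmodule (Fin (n + 1)) A (mdeg α + 1) = ⊥)
    {i j : Fin (n + 1)} (hj : α j ≠ 0) (hjα : ∀ k, α k ≠ 0 → j ≤ k) (hji : j < i) :
    monomial (single i 1) (1 : A) * F α ∈ Submodule.span A
      (markedMultiples J F (mdeg α + 1) fun _ δ => toColex δ < toColex (single i 1)) := by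
  obtain ⟨β, ε, hβ, hεβ, hε⟩ := exists_mem_minGens_add_eq_single_add hJ hα hj hjα hji
  have hdeg : mdeg β + mdeg ε = mdeg α + 1 := by
    have := congrArg mdeg hεβ
    simp only [mdeg_add, mdeg_single] at this
    omega
  have hg : monomial (single i 1) 1 * F α - monomial ε 1 * F β ∈ Submodule.span A
      (markedMultiples J F (mdeg α + 1)
        fun α' δ => minGeMax α' δ ∧ toColex δ < toColex (single i 1)) := by
    refine mem_span_of_mem_sup_nSpanDeg (span_markedMultiples_le J F _ _) hI
      (Ideal.sub_mem _ (monomial_mul_mem_markedIdeal hα _) (monomial_mul_mem_markedIdeal hβ _)) ?_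
    have hsub := monomial_mul_sub_monomial_mul_mem (A := A) hJ hF hα hβ le_rfl hε.le hεβ.symm
    rwa [mdeg_add, mdeg_single, add_comm 1] at hsub
  rw [← add_sub_cancel (monomial ε (1 : A) * F β) (monomial (single i 1) 1 * F α)]
  exact Submodule.add_mem _ (Submodule.subset_span ⟨β, ε, hβ, hdeg, hε, rfl⟩)
    (Submodule.span_mono (markedMultiples_mono fun _ _ hP => hP.2) hg)

lemma monomial_mul_mem_span_FSet (hJ : IsStronglyStable J) (hF : IsMarkedSet J F) {m : ℕ}
    (hm : ∀ α ∈ minGens J, mdeg α ≤ m)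
    (hI : ∀ s ≤ m + 1, ((markedIdeal J F).restrictScalars A ⊓ nSpan A J) ⊓
      homogeneousSubmodule (Fin (n + 1)) A s = ⊥)
    (η : Mon n) {α : Mon n} (hα : α ∈ minGens J) :
    monomial η (1 : A) * F α ∈ Submodule.span A (FSet J F (mdeg α + mdeg η)) := by
  induction η using wellFounded_toColex.induction generalizing α with
  | _ η ih =>
  by_cases hαη : minGeMax α η
  · exact Submodule.subset_span ⟨α, η, hα, rfl, hαη, rfl⟩
  obtain ⟨k, hk, l, hl, hkl⟩ : ∃ k ∈ α.support, ∃ l ∈ η.support, k < l := by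
    simpa [minGeMax] using hαη
  set j := α.support.min' ⟨k, hk⟩
  set i := η.support.max' ⟨l, hl⟩
  have hji : j < i :=
    ((α.support.min'_le k hk).trans_lt hkl).trans_le (η.support.le_max' l hl)
  obtain ⟨δ, hδ⟩ : ∃ δ, δ + single i 1 = η := ⟨_, tsub_add_cancel_of_le
    (Finsupp.single_le_iff.2 (Nat.one_le_iff_ne_zero.2 (mem_support_iff.1 (η.support.max'_mem _))))⟩
  have hstep := single_mul_mem_span_markedMultiples hJ hF hα (hI _ (by have := hm α hα; omega))
    (mem_support_iff.1 (α.support.min'_mem _))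
    (fun k hk => α.support.min'_le k (mem_support_iff.2 hk)) hji
  rw [← hδ, ← one_mul (1 : A), ← monomial_mul, mul_assoc]
  refine mul_mem_of_mem_span hstep ?_
  rintro _ ⟨β, ε, hβ, hdeg, hε, rfl⟩
  rw [← mul_assoc, monomial_mul, one_mul]
  have hlt : toColex (δ + ε) < toColex η := hδ ▸ (add_lt_add_iff_left (toColex δ)).2 hε
  convert ih _ hlt hβ using 3
  simp only [mdeg_add, mdeg_single] at hdeg ⊢
  omega

end LowDegrees

section Equivalences

lemma restrictScalars_markedIdeal (J : Set (Mon n)) (F : Mon n → MvPolynomial (Fin (n + 1)) A) :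
    (markedIdeal J F).restrictScalars A =
      Submodule.span A (Set.range (fun η : Mon n => monomial η (1 : A)) • (F '' minGens J)) := by
  refine (Submodule.span_smul_of_span_eq_top ?_ _).symm
  simpa [coe_basisMonomials] using (basisMonomials (Fin (n + 1)) A).span_eq

lemma homogeneousComponent_mem_span_FSet (hF : IsMarkedSet J F)
    (hmul : ∀ η α, α ∈ minGens J →
      monomial η (1 : A) * F α ∈ Submodule.span A (FSet J F (mdeg α + mdeg η)))
    {g : MvPolynomial (Fin (n + 1)) A} (hg : g ∈ markedIdeal J F) (t : ℕ) :
    homogeneousComponent t g ∈ Submodule.span A (FSet J F t) := by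
  replace hg : g ∈ (markedIdeal J F).restrictScalars A := hg
  rw [restrictScalars_markedIdeal] at hg
  induction hg using Submodule.span_induction with
  | mem x hx =>
    obtain ⟨_, ⟨η, rfl⟩, _, ⟨α, hα, rfl⟩, rfl⟩ := hx
    have hx := hmul η α hα
    rw [homogeneousComponent_of_mem
      (hF.span_markedMultiples_le_homogeneousSubmodule _ _ hx)]
    split_ifs with ht
    · exact ht ▸ hx
    · exact Submodule.zero_mem _
  | zero => simp
  | add x y _ _ hx hy => rw [map_add]; exact Submodule.add_mem _ hx hy
  | smul r x _ hx => rw [map_smul]; exact Submodule.smul_mem _ r hx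

lemma span_FSet_le_idealDeg (hF : IsMarkedSet J F) (s : ℕ) :
    Submodule.span A (FSet J F s) ≤ idealDeg A (markedIdeal J F) s :=
  le_inf (span_markedMultiples_le J F s _) (hF.span_markedMultiples_le_homogeneousSubmodule s _)

lemma idealDeg_le_span_FSet (hJ : IsStronglyStable J) (hF : IsMarkedSet J F) {s : ℕ}
    (hI : ((markedIdeal J F).restrictScalars A ⊓ nSpan A J) ⊓
      homogeneousSubmodule (Fin (n + 1)) A s = ⊥) :
    idealDeg A (markedIdeal J F) s ≤ Submodule.span A (FSet J F s) := fun _ hg =>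
  mem_span_of_mem_sup_nSpanDeg (span_markedMultiples_le J F s _) hI hg.1
    (mem_span_FSet_sup_of_isHomogeneous hJ hF hg.2)

lemma inf_nSpan_inf_homogeneousSubmodule_eq_bot (hJ : IsMonomialIdeal J) (hF : IsMarkedSet J F)
    {s : ℕ} (h : idealDeg A (markedIdeal J F) s = Submodule.span A (FSet J F s)) :
    ((markedIdeal J F).restrictScalars A ⊓ nSpan A J) ⊓
      homogeneousSubmodule (Fin (n + 1)) A s = ⊥ := by
  refine eq_bot_iff.2 fun q hq => (Submodule.mem_bot A).2 ?_
  have hqI : q ∈ idealDeg A (markedIdeal J F) s := ⟨hq.1.1, hq.2⟩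
  exact eq_zero_of_mem_span_FSet_of_mem_nSpan hJ hF (h ▸ hqI) hq.1.2

lemma disjoint_markedIdeal_nSpan (hJ : IsStronglyStable J) (hF : IsMarkedSet J F) {m : ℕ}
    (hm : ∀ α ∈ minGens J, mdeg α ≤ m)
    (hI : ∀ s ≤ m + 1, ((markedIdeal J F).restrictScalars A ⊓ nSpan A J) ⊓
      homogeneousSubmodule (Fin (n + 1)) A s = ⊥) :
    Disjoint ((markedIdeal J F).restrictScalars A) (nSpan A J) := by
  refine Submodule.disjoint_def.2 fun g hgI hgN => ?_
  rw [← g.sum_homogeneousComponent]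
  exact Finset.sum_eq_zero fun t _ => eq_zero_of_mem_span_FSet_of_mem_nSpan hJ.1 hF
    (homogeneousComponent_mem_span_FSet hF
      (fun η _ hα => monomial_mul_mem_span_FSet hJ hF hm hI η hα) hgI t)
    (homogeneousComponent_mem_nSpan hgN t)

end Equivalences

end MarkedFamilies

open MvPolynomial MarkedFamilies in
theorem stmt_8_general {n : ℕ} {A : Type*} [CommRing A]
    (J : Set (Mon n)) (hJ : IsStronglyStable J)
    (m : ℕ) (hm : ∀ α ∈ minGens J, mdeg α ≤ m)
    (F : Mon n → MvPolynomial (Fin (n + 1)) A) (hF : IsMarkedSet J F) :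
    List.TFAE
      [IsMarkedBasis J F,
       ∀ s : ℕ, s ≤ m + 1 →
         idealDeg A (markedIdeal J F) s = Submodule.span A (FSet J F s),
       ∀ s : ℕ, s ≤ m + 1 →
         (Submodule.restrictScalars A (markedIdeal J F) ⊓ nSpan A J)
           ⊓ homogeneousSubmodule (Fin (n + 1)) A s = ⊥] := by
  tfae_have 1 → 2 := fun h s _ => le_antisymm
    (idealDeg_le_span_FSet hJ hF (by rw [h.2.disjoint.eq_bot, bot_inf_eq]))
    (span_FSet_le_idealDeg hF s)
  tfae_have 2 → 3 := fun h s hs => inf_nSpan_inf_homogeneousSubmodule_eq_bot hJ.1 hF (h s hs)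
  tfae_have 3 → 1 := fun h =>
    ⟨hF, disjoint_markedIdeal_nSpan hJ hF hm h, codisjoint_markedIdeal_nSpan hJ hF⟩
  tfae_finish

open MvPolynomial MarkedFamilies in
/-- the marked basis property can be checked in degrees `s ≤ m + 1`,
where `m` is the maximal degree of a minimal generator of `J`. -/
theorem stmt_8 {n : ℕ} {A : Type*} [CommRing A] [IsNoetherianRing A]
    (J : Set (Mon n)) (hJ : IsStronglyStable J)
    (m : ℕ) (hm : ∀ α ∈ minGens J, mdeg α ≤ m) (hm' : ∃ α ∈ minGens J, mdeg α = m)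
    (F : Mon n → MvPolynomial (Fin (n + 1)) A) (hF : IsMarkedSet J F) :
    List.TFAE
      [IsMarkedBasis J F,
       ∀ s : ℕ, s ≤ m + 1 →
         idealDeg A (markedIdeal J F) s = Submodule.span A (FSet J F s),
       ∀ s : ℕ, s ≤ m + 1 →
         (Submodule.restrictScalars A (markedIdeal J F) ⊓ nSpan A J)
           ⊓ homogeneousSubmodule (Fin (n + 1)) A s = ⊥] :=
  stmt_8_general J hJ m hm F hF
end

section
/- Let J be a strongly stable monomial ideal in A[x₀,…,xₙ] over a commutative noetherian ring A, and let I be a homogeneous ideal such that A[x] = I ⊕ ⟨N(J)⟩ as A-modules. Then the unique J-marked set F_J contained in I generates I, i.e., I = (F_J), and F_J is a J-marked basis; moreover F_J is the unique J-marked basis contained in I. -/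
open MvPolynomial

namespace StmtTenAux

open MarkedFamilies MvPolynomial

variable {n : ℕ}

/-- lex order with largest index dominant -/
def Rlt : Mon n → Mon n → Prop := Finsupp.Lex (fun j i : Fin (n + 1) => i < j) (· < ·)

lemma Rlt_wf : WellFounded (Rlt (n := n)) := by
  haveI : IsStrictTotalOrder (Fin (n + 1)) (fun j i : Fin (n + 1) => i < j) := by
    constructor
  exact Finsupp.Lex.wellFounded_of_finite _ (wellFounded_lt)

lemma mdeg_add (a b : Mon n) : mdeg (a + b) = mdeg a + mdeg b := by
  unfold mdeg
  exact Finsupp.sum_add_index' (fun _ => rfl) (fun _ _ _ => rfl)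

lemma mdeg_single (j : Fin (n + 1)) : mdeg (Finsupp.single j 1 : Mon n) = 1 := by
  unfold mdeg; simp

lemma exists_decomp {J : Set (Mon n)} (hJ : IsStronglyStable J) :
    ∀ η ∈ J, ∃ α δ : Mon n, α ∈ minGens J ∧ minGeMax α δ ∧ η = α + δ := by
  suffices H : ∀ m : ℕ, ∀ η : Mon n, mdeg η ≤ m → η ∈ J →
      ∃ α δ : Mon n, α ∈ minGens J ∧ minGeMax α δ ∧ η = α + δ by
    intro η hη; exact H (mdeg η) η le_rfl hη
  intro m
  induction m with
  | zero =>
    intro η hm hη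
    have hη0 : η = 0 := by
      ext i
      have hi : η i ≤ mdeg η := by
        by_cases h : i ∈ η.support
        · exact Finset.single_le_sum (fun _ _ => Nat.zero_le _) h
        · simp [Finsupp.notMem_support_iff.mp h]
      simp only [Finsupp.coe_zero, Pi.zero_apply]; omega
    subst hη0
    exact ⟨0, 0, ⟨hη, fun j hj => by simp at hj⟩, fun i hi j hj => by simp at hj,
      (add_zero _).symm⟩
  | succ m ih =>
    intro η hm hη
    by_cases hmin : ∀ j : Fin (n + 1), η j ≠ 0 → η - Finsupp.single j 1 ∉ J
    · exact ⟨η, 0, ⟨hη, hmin⟩, fun i hi j hj => by simp at hj, (add_zero _).symm⟩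
    push_neg at hmin
    obtain ⟨k, hk, hkJ⟩ := hmin
    have hne : η.support.Nonempty := ⟨k, Finsupp.mem_support_iff.mpr hk⟩
    set j := η.support.min' hne with hjdef
    have hjmem : j ∈ η.support := η.support.min'_mem hne
    have hjne : η j ≠ 0 := Finsupp.mem_support_iff.mp hjmem
    have hjmin : ∀ i ∈ η.support, j ≤ i := fun i hi => η.support.min'_le i hi
    have hjJ : η - Finsupp.single j 1 ∈ J := by
      by_cases hjk : j = k
      · rwa [hjk]
      · have hjk' : j < k := lt_of_le_of_ne (hjmin k (Finsupp.mem_support_iff.mpr hk)) hjk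
        have h1 : (η - Finsupp.single k 1 : Mon n) j ≠ 0 := by
          rw [Finsupp.tsub_apply, Finsupp.single_apply]
          simp only [if_neg (Ne.symm hjk)]
          omega
        have h2 := hJ.2 _ hkJ j h1 k hjk'
        have h3 : η - Finsupp.single k 1 - Finsupp.single j 1 + Finsupp.single k 1
            = η - Finsupp.single j 1 := by
          ext i
          simp only [Finsupp.add_apply, Finsupp.tsub_apply, Finsupp.single_apply]
          have hki : η k ≠ 0 := hk
          split_ifs <;> subst_vars <;> simp_all <;> omega
        rwa [h3] at h2
    have hdeg : mdeg (η - Finsupp.single j 1) ≤ m := by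
      have heq2 : η = (η - Finsupp.single j 1) + Finsupp.single j 1 := by
        ext i
        simp only [Finsupp.add_apply, Finsupp.tsub_apply, Finsupp.single_apply]
        split_ifs <;> subst_vars <;> simp_all <;> omega
      have h6 : mdeg η = mdeg (η - Finsupp.single j 1) + 1 := by
        conv_lhs => rw [heq2]
        rw [mdeg_add, mdeg_single]
      omega
    obtain ⟨α, δ', hαm, hmm, heq⟩ := ih (η - Finsupp.single j 1) hdeg hjJ
    have h8 : ∀ i, (η - Finsupp.single j 1 : Mon n) i = α i + δ' i := by
      intro i; rw [heq]; rfl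
    refine ⟨α, δ' + Finsupp.single j 1, hαm, ?_, ?_⟩
    · intro i hi l hl
      have hisup : i ∈ η.support := by
        have h7 : α i ≠ 0 := Finsupp.mem_support_iff.mp hi
        have h9 := h8 i
        rw [Finsupp.tsub_apply] at h9
        rw [Finsupp.mem_support_iff]
        omega
      rcases Finset.mem_union.mp (Finsupp.support_add hl) with hl'|hl'
      · exact hmm i hi l hl'
      · have hlj : l = j := Finset.mem_singleton.mp (Finsupp.support_single_subset hl')
        exact hlj ▸ hjmin i hisup
    · ext i
      have h9 := h8 i
      rw [Finsupp.tsub_apply] at h9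
      simp only [Finsupp.add_apply, Finsupp.single_apply]
      split_ifs <;> subst_vars <;> simp_all <;> omega

lemma descent {J : Set (Mon n)} (hmono : IsMonomialIdeal J) {α' δ' δ γ : Mon n}
    (hγ : γ ∉ J) (hα' : α' ∈ J) (hmm : minGeMax α' δ') (heq : α' + δ' = γ + δ) :
    Rlt δ' δ := by
  have happ : ∀ i, α' i + δ' i = γ i + δ i := by
    intro i
    have h0 : (α' + δ' : Mon n) i = (γ + δ : Mon n) i := by rw [heq]
    simpa [Finsupp.add_apply] using h0
  have hne : δ' ≠ δ := by
    rintro rfl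
    have hγα : α' = γ := by ext i; have := happ i; omega
    exact hγ (hγα ▸ hα')
  have hTne : (Finset.univ.filter fun i : Fin (n + 1) => δ' i ≠ δ i).Nonempty := by
    by_contra h
    rw [Finset.not_nonempty_iff_eq_empty] at h
    apply hne
    ext i
    by_contra hi
    have : i ∈ Finset.univ.filter fun i : Fin (n + 1) => δ' i ≠ δ i :=
      Finset.mem_filter.mpr ⟨Finset.mem_univ i, hi⟩
    simp [h] at this
  set T := Finset.univ.filter fun i : Fin (n + 1) => δ' i ≠ δ i with hT
  set i := T.max' hTne with hi
  have himem : δ' i ≠ δ i := (Finset.mem_filter.mp (T.max'_mem hTne)).2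
  have hiabove : ∀ l, i < l → δ' l = δ l := by
    intro l hl
    by_contra h
    exact absurd (T.le_max' l (Finset.mem_filter.mpr ⟨Finset.mem_univ l, h⟩))
      (not_le.mpr hl)
  have hlt : δ' i < δ i := by
    rcases lt_or_gt_of_ne himem with h|h
    · exact h
    · exfalso
      have hile : ∀ l, α' l ≤ γ l := by
        intro l
        rcases lt_trichotomy l i with hl|hl|hl
        · have hz : α' l = 0 := by
            by_contra hz
            have hi' : i ∈ δ'.support := Finsupp.mem_support_iff.mpr (by omega)
            have := hmm l (Finsupp.mem_support_iff.mpr hz) i hi'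
            omega
          have := happ l
          omega
        · have h1 := happ l
          rw [hl] at h1 ⊢
          omega
        · have h1 := happ l
          have h2 := hiabove l hl
          omega
      have hsplit : γ = α' + (γ - α') := by
        ext l
        have := hile l
        simp only [Finsupp.add_apply, Finsupp.tsub_apply]
        omega
      exact hγ (hsplit ▸ hmono α' hα' (γ - α'))
  exact Finsupp.lex_def.mpr ⟨i, fun l hl => hiabove l hl, hlt⟩

section RingPart

variable {A : Type*} [CommRing A]

lemma mem_of_support_subset {S : Submodule A (MvPolynomial (Fin (n + 1)) A)}
    {p : MvPolynomial (Fin (n + 1)) A}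
    (h : ∀ γ ∈ p.support, (monomial γ (1 : A)) ∈ S) : p ∈ S := by
  have h2 : (∑ v ∈ p.support, monomial v (coeff v p)) ∈ S := by
    refine Submodule.sum_mem _ fun γ hγ => ?_
    rw [show (monomial γ (coeff γ p)) = (coeff γ p) • monomial γ (1 : A) by
      rw [smul_monomial, smul_eq_mul, mul_one]]
    exact Submodule.smul_mem _ _ (h γ hγ)
  rwa [← p.as_sum] at h2

lemma gen_mem {J : Set (Mon n)} (hJ : IsStronglyStable J)
    {F : Mon n → MvPolynomial (Fin (n + 1)) A} (hF : IsMarkedSet J F) :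
    ∀ δ α : Mon n, α ∈ minGens J → minGeMax α δ →
      (monomial (α + δ) (1 : A)) ∈
        Submodule.restrictScalars A (markedIdeal J F) ⊔ nSpan A J := by
  intro δ
  refine Rlt_wf.induction (C := fun δ => ∀ α : Mon n, α ∈ minGens J → minGeMax α δ →
      (monomial (α + δ) (1 : A)) ∈
        Submodule.restrictScalars A (markedIdeal J F) ⊔ nSpan A J) δ ?_
  intro δ ih α hα hmm
  have hq : monomial δ (1 : A) * F α ∈
      Submodule.restrictScalars A (markedIdeal J F) ⊔ nSpan A J :=
    Submodule.mem_sup_left (Ideal.mul_mem_left _ _ (Ideal.subset_span ⟨α, hα, rfl⟩))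
  set r := F α - monomial α (1 : A) with hr
  have hkey : monomial (α + δ) (1 : A)
      = monomial δ (1 : A) * F α - monomial δ (1 : A) * r := by
    rw [hr, mul_sub, sub_sub_cancel, monomial_mul, one_mul]
    exact congrArg (fun m => monomial m (1 : A)) (add_comm α δ)
  rw [hkey]
  refine Submodule.sub_mem _ hq (mem_of_support_subset fun τ hτ => ?_)
  have hτ2 := MvPolynomial.support_mul _ _ hτ
  rw [Finset.mem_add] at hτ2
  obtain ⟨y, hy, z, hz, hyz⟩ := hτ2
  have hyδ : y = δ := Finset.mem_singleton.mp (support_monomial_subset hy)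
  rw [← hyz, hyδ]
  have hrα : coeff α r = 0 := by
    rw [hr, coeff_sub, (hF α hα).1, coeff_monomial, if_pos rfl, sub_self]
  have hzα : z ≠ α := fun h => (mem_support_iff.mp hz) (h ▸ hrα)
  have hzF : z ∈ (F α).support := by
    rw [mem_support_iff]
    have h1 : coeff z r = coeff z (F α) := by
      rw [hr, coeff_sub, coeff_monomial, if_neg (Ne.symm hzα), sub_zero]
    rw [← h1]
    exact mem_support_iff.mp hz
  obtain ⟨hzJ, _⟩ := (hF α hα).2 z hzF hzα
  by_cases hmem : δ + z ∈ J
  · obtain ⟨α', δ', hα', hmm', heq'⟩ := exists_decomp hJ _ hmem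
    have hdes : Rlt δ' δ :=
      descent hJ.1 hzJ hα'.1 hmm' (heq'.symm.trans (add_comm δ z))
    have := ih δ' hdes α' hα' hmm'
    rwa [← heq'] at this
  · exact Submodule.mem_sup_right (Submodule.subset_span ⟨δ + z, hmem, rfl⟩)

lemma sup_eq_top {J : Set (Mon n)} (hJ : IsStronglyStable J)
    {F : Mon n → MvPolynomial (Fin (n + 1)) A} (hF : IsMarkedSet J F) :
    Submodule.restrictScalars A (markedIdeal J F) ⊔ nSpan A J = ⊤ := by
  rw [eq_top_iff]
  intro p _
  refine mem_of_support_subset fun η _ => ?_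
  by_cases hη : η ∈ J
  · obtain ⟨α, δ, hα, hmm, heq⟩ := exists_decomp hJ η hη
    rw [heq]
    exact gen_mem hJ hF δ α hα hmm
  · exact Submodule.mem_sup_right (Submodule.subset_span ⟨η, hη, rfl⟩)

end RingPart

end StmtTenAux
open MarkedFamilies in
/-- the unique `J`-marked set contained in an ideal `I` with
`A[x] = I ⊕ ⟨N(J)⟩` generates `I`, is a `J`-marked basis, and is the unique
`J`-marked basis contained in `I`. -/
theorem stmt_10 {n : ℕ} {A : Type*} [CommRing A] [IsNoetherianRing A]
    (J : Set (Mon n)) (hJ : IsStronglyStable J)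
    (I : Ideal (MvPolynomial (Fin (n + 1)) A)) (hIh : IsHomogIdeal A I)
    (hI : IsCompl (Submodule.restrictScalars A I) (nSpan A J))
    (F : Mon n → MvPolynomial (Fin (n + 1)) A) (hF : IsMarkedSet J F)
    (hFI : ∀ α ∈ minGens J, F α ∈ I) :
    markedIdeal J F = I ∧ IsMarkedBasis J F ∧
      ∀ G : Mon n → MvPolynomial (Fin (n + 1)) A, IsMarkedBasis J G →
        (∀ α ∈ minGens J, G α ∈ I) → ∀ α ∈ minGens J, G α = F α := by
  classical
  have hle : markedIdeal J F ≤ I := by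
    rw [markedIdeal, Ideal.span_le]
    rintro p ⟨α, hα, rfl⟩
    exact hFI α hα
  have hle' : Submodule.restrictScalars A (markedIdeal J F) ≤ Submodule.restrictScalars A I :=
    fun x hx => hle hx
  have htop : Submodule.restrictScalars A (markedIdeal J F) ⊔ nSpan A J = ⊤ :=
    StmtTenAux.sup_eq_top hJ hF
  have hdisj : Disjoint (Submodule.restrictScalars A (markedIdeal J F)) (nSpan A J) :=
    hI.disjoint.mono_left hle'
  have hcompl : IsCompl (Submodule.restrictScalars A (markedIdeal J F)) (nSpan A J) :=
    ⟨hdisj, codisjoint_iff.mpr htop⟩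
  have hMeq : Submodule.restrictScalars A (markedIdeal J F) = Submodule.restrictScalars A I := by
    have hmod : (Submodule.restrictScalars A (markedIdeal J F) ⊔ nSpan A J)
          ⊓ Submodule.restrictScalars A I
        = Submodule.restrictScalars A (markedIdeal J F)
          ⊔ (nSpan A J ⊓ Submodule.restrictScalars A I) :=
      sup_inf_assoc_of_le _ hle'
    rw [htop, top_inf_eq] at hmod
    have hb : nSpan A J ⊓ Submodule.restrictScalars A I = ⊥ := by
      rw [inf_comm]
      exact hI.disjoint.eq_bot
    rw [hb, sup_bot_eq] at hmod
    exact hmod.symm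
  have hIdeal : markedIdeal J F = I := by
    exact Submodule.restrictScalars_injective A _ _ hMeq
  refine ⟨hIdeal, ⟨hF, hcompl⟩, ?_⟩
  intro G hG hGI α hα
  have hmemI : G α - F α ∈ I := I.sub_mem (hGI α hα) (hFI α hα)
  have hmemN : G α - F α ∈ nSpan A J := by
    refine StmtTenAux.mem_of_support_subset fun γ hγ => ?_
    have hcγ : MvPolynomial.coeff γ (G α - F α) ≠ 0 := MvPolynomial.mem_support_iff.mp hγ
    have hγα : γ ≠ α := by
      intro h
      rw [h, MvPolynomial.coeff_sub, (hG.1 α hα).1, (hF α hα).1, sub_self] at hcγ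
      exact hcγ rfl
    have hγJ : γ ∉ J := by
      rw [MvPolynomial.coeff_sub] at hcγ
      by_cases h1 : γ ∈ (G α).support
      · exact ((hG.1 α hα).2 γ h1 hγα).1
      · have h2 : γ ∈ (F α).support := by
          rw [MvPolynomial.mem_support_iff]
          intro h
          rw [MvPolynomial.notMem_support_iff.mp h1, h, sub_zero] at hcγ
          exact hcγ rfl
        exact ((hF α hα).2 γ h2 hγα).1
    exact Submodule.subset_span ⟨γ, hγJ, rfl⟩
  have hzero : G α - F α = 0 := by
    have hd : G α - F α ∈ Submodule.restrictScalars A I ⊓ nSpan A J :=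
      Submodule.mem_inf.mpr ⟨hmemI, hmemN⟩
    simpa using hI.disjoint.le_bot hd
  exact sub_eq_zero.mp hzero
end

section
/- Let J be a strongly stable monomial ideal, A and B commutative noetherian rings, and φ: A → B a ring homomorphism. If F_J = { f_α = x^α − Σ c_{αβ} x^β : x^α ∈ B_J } is a J-marked basis in A[x₀,…,xₙ], then the set F'_J = { x^α − Σ φ(c_{αβ}) x^β : x^α ∈ B_J } obtained by applying φ to the coefficients is a J-marked basis in B[x₀,…,xₙ], and the ideal it generates is the extension of (F_J) along the induced map A[x] → B[x]. -/
open MvPolynomial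

/-!
`A[x] = (F_J) ⊕ ⟨N(J)⟩` is a decomposition of a free `A`-module, and base change along `φ`
preserves direct sum decompositions: the `B`-spans of the images of two complementary
submodules of `A[x]` are complementary in `B[x]`. Disjointness comes from transporting the
projection of `A[x]` onto `⟨N(J)⟩` along `(F_J)` to the `B`-linear map of `B[x]` with the same
values on monomials; spanning holds because every monomial of `B[x]` is the image of one of
`A[x]`. It remains to identify the two spans: that of the image of `⟨N(J)⟩` is `⟨N(J)⟩` over
`B`, and that of the image of `(F_J)` is the extended ideal, which is generated by `F'_J`.
-/

namespace MvPolynomial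

variable {σ A B : Type*} [CommRing A] [CommRing B] (φ : A →+* B)

noncomputable def baseChangeEnd (f : MvPolynomial σ A →ₗ[A] MvPolynomial σ A) :
    MvPolynomial σ B →ₗ[B] MvPolynomial σ B :=
  (basisMonomials σ B).constr B fun γ => map φ (f (monomial γ 1))

lemma baseChangeEnd_monomial_one (f : MvPolynomial σ A →ₗ[A] MvPolynomial σ A) (γ : σ →₀ ℕ) :
    baseChangeEnd φ f (monomial γ 1) = map φ (f (monomial γ 1)) := by
  unfold baseChangeEnd
  simpa [coe_basisMonomials] using
    (basisMonomials σ B).constr_basis B (fun γ => map φ (f (monomial γ 1))) γ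

lemma baseChangeEnd_map (f : MvPolynomial σ A →ₗ[A] MvPolynomial σ A) (p : MvPolynomial σ A) :
    baseChangeEnd φ f (map φ p) = map φ (f p) := by
  induction p using MvPolynomial.induction_on' with
  | monomial γ a =>
    have hA : (monomial γ a : MvPolynomial σ A) = a • monomial γ 1 := by
      rw [smul_monomial, smul_eq_mul, mul_one]
    have hB : (monomial γ (φ a) : MvPolynomial σ B) = φ a • monomial γ 1 := by
      rw [smul_monomial, smul_eq_mul, mul_one]
    rw [map_monomial, hB, map_smul, baseChangeEnd_monomial_one, hA, map_smul,
      smul_eq_C_mul, smul_eq_C_mul, map_mul, map_C]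
  | add p q hp hq => rw [map_add, map_add, hp, hq, map_add, map_add]

theorem isCompl_span_map {p q : Submodule A (MvPolynomial σ A)} (hpq : IsCompl p q) :
    IsCompl (Submodule.span B (map φ '' (p : Set (MvPolynomial σ A))))
      (Submodule.span B (map φ '' (q : Set (MvPolynomial σ A)))) := by
  constructor
  · set π := baseChangeEnd φ (q.projection p hpq.symm)
    have hp : Submodule.span B (map φ '' p) ≤ LinearMap.ker π := by
      rw [Submodule.span_le]
      rintro _ ⟨g, hg, rfl⟩
      simp [π, baseChangeEnd_map, Submodule.projection_apply_of_mem_right hpq.symm hg]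
    have hq : Submodule.span B (map φ '' q) ≤ LinearMap.eqLocus π LinearMap.id := by
      rw [Submodule.span_le]
      rintro _ ⟨g, hg, rfl⟩
      simp [π, baseChangeEnd_map, Submodule.projection_apply_of_mem_left hpq.symm hg]
    rw [Submodule.disjoint_def]
    intro x hxp hxq
    have hπx : π x = x := hq hxq
    rw [← hπx]
    exact hp hxp
  · rw [codisjoint_iff, eq_top_iff, ← (basisMonomials σ B).span_eq, Submodule.span_le]
    rintro _ ⟨γ, rfl⟩
    obtain ⟨y, hy, z, hz, hyz⟩ :=
      Submodule.mem_sup.mp (hpq.sup_eq_top ▸ Submodule.mem_top : monomial γ (1 : A) ∈ p ⊔ q)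
    have hγ : (monomial γ 1 : MvPolynomial σ B) = map φ y + map φ z := by
      rw [← map_add, hyz, map_monomial, map_one φ]
    simp only [coe_basisMonomials, SetLike.mem_coe]
    rw [hγ]
    exact Submodule.add_mem_sup (Submodule.subset_span ⟨y, hy, rfl⟩)
      (Submodule.subset_span ⟨z, hz, rfl⟩)

theorem restrictScalars_map_eq_span (I : Ideal (MvPolynomial σ A)) :
    (I.map (map φ)).restrictScalars B = Submodule.span B (map φ '' I) := by
  -- the monomials span `B[x]` over `B`, and the image of `I` is stable under multiplication
  -- by monomials
  have hmon : Submodule.span B (Set.range fun γ => (monomial γ 1 : MvPolynomial σ B)) = ⊤ := by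
    rw [← coe_basisMonomials, Module.Basis.span_eq]
  rw [Ideal.map, Ideal.span, ← Submodule.span_smul_of_span_eq_top hmon]
  refine le_antisymm (Submodule.span_mono ?_) (Submodule.span_mono ?_)
  · rintro _ ⟨_, ⟨γ, rfl⟩, _, ⟨g, hg, rfl⟩, rfl⟩
    refine ⟨monomial γ 1 * g, I.mul_mem_left _ hg, ?_⟩
    beta_reduce
    rw [map_mul, map_monomial, map_one, smul_eq_mul]
  · rintro _ ⟨g, hg, rfl⟩
    exact ⟨1, ⟨0, rfl⟩, map φ g, ⟨g, hg, rfl⟩, one_smul _ _⟩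

end MvPolynomial

namespace MarkedFamilies

variable {n : ℕ} {A B : Type*} [CommRing A] [CommRing B] (φ : A →+* B)

theorem IsMarkedSet.map {J : Set (Mon n)} {F : Mon n → MvPolynomial (Fin (n + 1)) A}
    (hF : IsMarkedSet J F) : IsMarkedSet J fun α => map φ (F α) := by
  intro α hα
  refine ⟨by rw [coeff_map, (hF α hα).1, map_one], fun β hβ hβα => ?_⟩
  exact (hF α hα).2 β (support_map_subset φ (F α) hβ) hβα

theorem markedIdeal_map (J : Set (Mon n)) (F : Mon n → MvPolynomial (Fin (n + 1)) A) :
    markedIdeal J (fun α => map φ (F α)) = (markedIdeal J F).map (map φ) := by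
  rw [markedIdeal, markedIdeal, Ideal.map_span, Set.image_image]

theorem span_map_nSpan (J : Set (Mon n)) :
    Submodule.span B (map φ '' nSpan A J) = nSpan B J := by
  refine le_antisymm (Submodule.span_le.mpr ?_) (Submodule.span_le.mpr ?_)
  · rintro _ ⟨p, hp, rfl⟩
    refine Submodule.span_induction (fun x hx => ?_) (by simp) (fun x y _ _ hx hy => ?_)
      (fun a x _ hx => ?_) hp
    · obtain ⟨β, hβ, rfl⟩ := hx
      exact Submodule.subset_span ⟨β, hβ, by rw [map_monomial, map_one]⟩
    · rw [map_add]; exact add_mem hx hy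
    · rw [smul_eq_C_mul, map_mul, map_C, ← smul_eq_C_mul]; exact Submodule.smul_mem _ _ hx
  · rintro _ ⟨β, hβ, rfl⟩
    exact Submodule.subset_span
      ⟨monomial β 1, Submodule.subset_span ⟨β, hβ, rfl⟩, by rw [map_monomial, map_one]⟩

end MarkedFamilies

open MarkedFamilies in
theorem stmt_11_general {n : ℕ} {A B : Type*} [CommRing A]
    [CommRing B] (φ : A →+* B)
    (J : Set (Mon n))
    (F : Mon n → MvPolynomial (Fin (n + 1)) A) (hF : IsMarkedBasis J F) :
    IsMarkedBasis J (fun α => MvPolynomial.map φ (F α)) ∧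
    markedIdeal J (fun α => MvPolynomial.map φ (F α))
      = Ideal.map (MvPolynomial.map φ) (markedIdeal J F) := by
  refine ⟨⟨hF.1.map φ, ?_⟩, markedIdeal_map φ J F⟩
  rw [markedIdeal_map, restrictScalars_map_eq_span, ← span_map_nSpan φ J]
  simpa only [Submodule.coe_restrictScalars] using isCompl_span_map φ hF.2

open MarkedFamilies in
/-- base change of a `J`-marked basis along a ring homomorphism is a
`J`-marked basis, and generates the extended ideal. -/
theorem stmt_11 {n : ℕ} {A B : Type*} [CommRing A] [IsNoetherianRing A]
    [CommRing B] [IsNoetherianRing B] (φ : A →+* B)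
    (J : Set (Mon n)) (hJ : IsStronglyStable J)
    (F : Mon n → MvPolynomial (Fin (n + 1)) A) (hF : IsMarkedBasis J F) :
    IsMarkedBasis J (fun α => MvPolynomial.map φ (F α)) ∧
    markedIdeal J (fun α => MvPolynomial.map φ (F α))
      = Ideal.map (MvPolynomial.map φ) (markedIdeal J F) :=
  stmt_11_general φ J F hF
end
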